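/- arXiv:1211.0507 — 6 statements merged into one kernel-verified Lean document; each statement's English description precedes it below -/
import Mathlib

section
/- Let μ̂ be a bicapacity on J. Then Ch^B(x,μ̂) = −Ch^B(−x,μ̂) for all x ∈ [−1,1]^n if and only if μ̂(C,D) = −μ̂(D,C) for every (C,D) ∈ P(J). -/
/-!
Replacing `x` by `-x` swaps the two level sets `{x > t}` and `{x < -t}`, so antisymmetry of `μ̂`
on disjoint pairs makes the integrands of `Ch^B(-x)` and `-Ch^B(x)` agree for every `t ≥ 0`.
Conversely, the ternary vector equal to `1` on `C`, `-1` on `D` and `0` elsewhere has constant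
level sets `(C, D)` for `t ∈ [0, 1)`, so its integral is `μ̂(C, D)`, and its negative is the
vector attached to `(D, C)`.
-/

/-- The bipolar Choquet integral of `x` with respect to `μ`:
`∫₀¹ μ({j : x j > t}, {j : x j < -t}) dt`. The same formula is used for
`Ch^B`, `Ch^{B+}` and `Ch^{B-}` (with `μ̂`, `μ⁺`, `μ⁻` respectively). -/
noncomputable def ChB {n : ℕ} (μ : Finset (Fin n) → Finset (Fin n) → ℝ)
    (x : Fin n → ℝ) : ℝ :=
  ∫ t in (0:ℝ)..1,
    μ (Finset.univ.filter (fun j => t < x j)) (Finset.univ.filter (fun j => x j < -t))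

open Finset

section SignVec

variable {ι : Type*} [DecidableEq ι] {C D : Finset ι}

noncomputable def signVec (C D : Finset ι) : ι → ℝ :=
  fun j => if j ∈ C then 1 else if j ∈ D then -1 else 0

lemma neg_signVec (hCD : Disjoint C D) : -signVec C D = signVec D C := by
  funext j
  by_cases hC : j ∈ C
  · have hD : j ∉ D := disjoint_left.mp hCD hC
    simp [signVec, hC, hD]
  · by_cases hD : j ∈ D <;> simp [signVec, hC, hD]

lemma signVec_mem_Icc (j : ι) : signVec C D j ∈ Set.Icc (-1 : ℝ) 1 := by
  unfold signVec
  split_ifs <;> norm_num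

end SignVec

section LevelSets

variable {ι : Type*} [Fintype ι]

lemma filter_lt_neg_apply (x : ι → ℝ) (t : ℝ) :
    univ.filter (fun j => t < (-x) j) = univ.filter (fun j => x j < -t) := by
  ext j
  simp only [mem_filter, mem_univ, true_and, Pi.neg_apply]
  constructor <;> intro <;> linarith

lemma filter_neg_apply_lt_neg (x : ι → ℝ) (t : ℝ) :
    univ.filter (fun j => (-x) j < -t) = univ.filter (fun j => t < x j) := by
  ext j
  simp only [mem_filter, mem_univ, true_and, Pi.neg_apply, neg_lt_neg_iff]

lemma disjoint_filter_lt_filter_lt_neg (x : ι → ℝ) {t : ℝ} (ht : 0 ≤ t) :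
    Disjoint (univ.filter (fun j => t < x j)) (univ.filter (fun j => x j < -t)) := by
  rw [disjoint_filter]
  intro j _ h
  linarith

variable [DecidableEq ι] {C D : Finset ι}

lemma filter_lt_signVec {t : ℝ} (ht0 : 0 ≤ t) (ht1 : t < 1) :
    univ.filter (fun j => t < signVec C D j) = C := by
  ext j
  simp only [mem_filter, mem_univ, true_and]
  unfold signVec
  by_cases hC : j ∈ C
  · simp only [hC, if_true, ht1]
  · have : ¬ t < (if j ∈ D then -1 else 0 : ℝ) := by split_ifs <;> linarith
    simp only [hC, if_false, this]

lemma filter_signVec_lt_neg (hCD : Disjoint C D) {t : ℝ} (ht0 : 0 ≤ t) (ht1 : t < 1) :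
    univ.filter (fun j => signVec C D j < -t) = D := by
  rw [← neg_neg (signVec C D), neg_signVec hCD, filter_neg_apply_lt_neg,
    filter_lt_signVec ht0 ht1]

end LevelSets

section ChB

variable {n : ℕ} {μ : Finset (Fin n) → Finset (Fin n) → ℝ}

lemma ChB_signVec {C D : Finset (Fin n)} (hCD : Disjoint C D) : ChB μ (signVec C D) = μ C D := by
  unfold ChB
  rw [intervalIntegral.integral_congr_Ioo_of_le zero_le_one (g := fun _ => μ C D)]
  · simp
  · rintro t ⟨ht0, ht1⟩
    simp only [filter_lt_signVec ht0.le ht1, filter_signVec_lt_neg hCD ht0.le ht1]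

lemma ChB_neg_of_antisymm (hμ : ∀ C D : Finset (Fin n), Disjoint C D → μ C D = -μ D C)
    (x : Fin n → ℝ) : ChB μ (-x) = -ChB μ x := by
  unfold ChB
  rw [← intervalIntegral.integral_neg]
  refine intervalIntegral.integral_congr fun t ht => ?_
  rw [Set.uIcc_of_le zero_le_one] at ht
  simp only [filter_lt_neg_apply, filter_neg_apply_lt_neg]
  exact hμ _ _ (disjoint_filter_lt_filter_lt_neg x ht.1).symm

end ChB

theorem stmt_4_general {n : ℕ}
    (hatμ : Finset (Fin n) → Finset (Fin n) → ℝ) :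
    (∀ x : Fin n → ℝ, (∀ j, x j ∈ Set.Icc (-1:ℝ) 1) →
        ChB hatμ x = -ChB hatμ (-x)) ↔
    (∀ C D : Finset (Fin n), Disjoint C D → hatμ C D = -hatμ D C) := by
  constructor
  · intro h C D hCD
    have := h (signVec C D) signVec_mem_Icc
    rwa [neg_signVec hCD, ChB_signVec hCD, ChB_signVec hCD.symm] at this
  · intro h x _
    rw [ChB_neg_of_antisymm h, neg_neg]

theorem stmt_4 {n : ℕ} (hn : 1 ≤ n)
    (hatμ : Finset (Fin n) → Finset (Fin n) → ℝ)
    (hrange : ∀ C D : Finset (Fin n), Disjoint C D → hatμ C D ∈ Set.Icc (-1:ℝ) 1)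
    (hb1 : hatμ ∅ Finset.univ = -1) (hb2 : hatμ Finset.univ ∅ = 1)
    (hb3 : hatμ ∅ ∅ = 0)
    (hmono : ∀ C D E F : Finset (Fin n), Disjoint C D → Disjoint E F →
        C ⊆ E → F ⊆ D → hatμ C D ≤ hatμ E F) :
    (∀ x : Fin n → ℝ, (∀ j, x j ∈ Set.Icc (-1:ℝ) 1) →
        ChB hatμ x = -ChB hatμ (-x)) ↔
    (∀ C D : Finset (Fin n), Disjoint C D → hatμ C D = -hatμ D C) :=
  stmt_4_general hatμ
end

section
/- Let μ⁺ be given by a 2-additive decomposition with coefficients a_j⁺, a_{jk}⁺, a⁺_{j|k}. Then for every x ∈ [−1,1]^n, Ch^{B+}(x,μ⁺) = Σ_{j ∈ J, x_j > 0} a_j⁺·x_j + Σ_{{j,k} ⊆ J, j ≠ k, x_j > 0, x_k > 0} a_{jk}⁺·min(x_j, x_k) + Σ_{j,k ∈ J, j ≠ k, x_j > 0, x_k < 0} a⁺_{j|k}·min(x_j, −x_k), where the second sum is over unordered pairs {j,k} and the third over ordered pairs (j,k). -/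
/-- Sum of a symmetric coefficient family over the unordered pairs `{j,k} ⊆ C`, `j ≠ k`. -/
noncomputable def pairSum {n : ℕ} (a : Fin n → Fin n → ℝ) (C : Finset (Fin n)) : ℝ :=
  (∑ p ∈ C.offDiag, a p.1 p.2) / 2

/-- `μ⁺(C,D) = Σ_{j∈C} a_j⁺ + Σ_{{j,k}⊆C} a_{jk}⁺ + Σ_{j∈C,k∈D} a⁺_{j|k}`. -/
noncomputable def muPlus {n : ℕ} (ap : Fin n → ℝ) (aps apo : Fin n → Fin n → ℝ)
    (C D : Finset (Fin n)) : ℝ :=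
  ∑ j ∈ C, ap j + pairSum aps C + ∑ j ∈ C, ∑ k ∈ D, apo j k

/-- `μ⁻(C,D) = Σ_{j∈D} a_j⁻ + Σ_{{j,k}⊆D} a_{jk}⁻ + Σ_{j∈C,k∈D} a⁻_{j|k}`. -/
noncomputable def muMinus {n : ℕ} (am : Fin n → ℝ) (ams amo : Fin n → Fin n → ℝ)
    (C D : Finset (Fin n)) : ℝ :=
  ∑ j ∈ D, am j + pairSum ams D + ∑ j ∈ C, ∑ k ∈ D, amo j k

open MeasureTheory Finset

lemma ite_lt_eq_indicator (a c : ℝ) :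
    (fun t => if t < c then a else 0) = (Set.Iio c).indicator fun _ => a := by
  funext t
  simp [Set.indicator_apply]

lemma intervalIntegrable_ite_lt (a c t₁ t₂ : ℝ) :
    IntervalIntegrable (fun t => if t < c then a else 0) volume t₁ t₂ := by
  rw [ite_lt_eq_indicator, intervalIntegrable_iff]
  exact (integrableOn_const measure_Ioc_lt_top.ne).indicator measurableSet_Iio

lemma integral_ite_lt_of_le_one (a : ℝ) {c : ℝ} (hc : c ≤ 1) :
    ∫ t in (0:ℝ)..1, (if t < c then a else 0) = if 0 < c then a * c else 0 := by
  rw [ite_lt_eq_indicator, intervalIntegral.integral_of_le zero_le_one,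
    setIntegral_indicator measurableSet_Iio, setIntegral_const]
  split_ifs with hc₀
  · rw [show Set.Ioc (0:ℝ) 1 ∩ Set.Iio c = Set.Ioo 0 c by grind,
      Real.volume_real_Ioo_of_le hc₀.le, smul_eq_mul, sub_zero, mul_comm]
  · rw [show Set.Ioc (0:ℝ) 1 ∩ Set.Iio c = ∅ by grind]
    simp

section LevelSets

variable {ι : Type*}

lemma intervalIntegrable_sum_filter_lt (s : Finset ι) (a c : ι → ℝ) (t₁ t₂ : ℝ) :
    IntervalIntegrable (fun t => ∑ i ∈ s with t < c i, a i) volume t₁ t₂ := by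
  simp_rw [sum_filter]
  simpa only [Finset.sum_fn] using
    IntervalIntegrable.sum s fun i _ => intervalIntegrable_ite_lt (a i) (c i) t₁ t₂

lemma integral_sum_filter_lt (s : Finset ι) (a c : ι → ℝ) (hc : ∀ i ∈ s, c i ≤ 1) :
    ∫ t in (0:ℝ)..1, ∑ i ∈ s with t < c i, a i = ∑ i ∈ s with 0 < c i, a i * c i := by
  simp_rw [sum_filter]
  rw [intervalIntegral.integral_finsetSum fun i _ => intervalIntegrable_ite_lt _ _ _ _]
  exact sum_congr rfl fun i hi => integral_ite_lt_of_le_one (a i) (hc i hi)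

lemma offDiag_filter_lt (s : Finset ι) (c : ι → ℝ) (t : ℝ) :
    {i ∈ s | t < c i}.offDiag = {p ∈ s.offDiag | t < min (c p.1) (c p.2)} := by
  ext p
  simp only [mem_offDiag, mem_filter, lt_min_iff]
  tauto

lemma product_filter_lt (s : Finset ι) (c d : ι → ℝ) (t : ℝ) :
    {i ∈ s | t < c i} ×ˢ {i ∈ s | t < d i} = {p ∈ s ×ˢ s | t < min (c p.1) (d p.2)} := by
  ext p
  simp only [mem_product, mem_filter, lt_min_iff]
  tauto

end LevelSets

lemma muPlus_levelSets {n : ℕ} (ap : Fin n → ℝ) (aps apo : Fin n → Fin n → ℝ)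
    (x : Fin n → ℝ) (t : ℝ) :
    muPlus ap aps apo {j | t < x j} {j | x j < -t} =
      ∑ j with t < x j, ap j + (∑ p ∈ univ.offDiag with t < min (x p.1) (x p.2), aps p.1 p.2) / 2
        + ∑ p ∈ univ ×ˢ univ with t < min (x p.1) (-x p.2), apo p.1 p.2 := by
  rw [muPlus, pairSum, offDiag_filter_lt, filter_congr fun j _ => lt_neg (a := x j),
    ← sum_product', product_filter_lt]

theorem stmt_7_general {n : ℕ}
    (ap : Fin n → ℝ) (aps apo : Fin n → Fin n → ℝ)
    (x : Fin n → ℝ) (hx : ∀ j, x j ∈ Set.Icc (-1:ℝ) 1) :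
    ChB (muPlus ap aps apo) x =
      ∑ j ∈ Finset.univ.filter (fun j => 0 < x j), ap j * x j
      + (∑ p ∈ (Finset.univ.filter (fun j => 0 < x j)).offDiag,
          aps p.1 p.2 * min (x p.1) (x p.2)) / 2
      + ∑ j ∈ Finset.univ.filter (fun j => 0 < x j),
          ∑ k ∈ Finset.univ.filter (fun k => x k < 0),
            apo j k * min (x j) (-x k) := by
  have hx₁ (j : Fin n) : x j ≤ 1 := (hx j).2
  have hI {ι : Type} (s : Finset ι) (a c : ι → ℝ) :
      IntervalIntegrable (fun t => ∑ i ∈ s with t < c i, a i) volume 0 1 :=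
    intervalIntegrable_sum_filter_lt s a c 0 1
  simp only [ChB, muPlus_levelSets]
  rw [intervalIntegral.integral_add ((hI _ _ _).add ((hI _ _ _).div_const 2)) (hI _ _ _),
    intervalIntegral.integral_add (hI _ _ _) ((hI _ _ _).div_const 2),
    intervalIntegral.integral_div, integral_sum_filter_lt _ _ _ fun j _ => hx₁ j,
    integral_sum_filter_lt _ _ _ fun p _ => (min_le_left _ _).trans (hx₁ p.1),
    integral_sum_filter_lt _ _ _ fun p _ => (min_le_left _ _).trans (hx₁ p.1), offDiag_filter_lt]
  simp_rw [← neg_pos, ← sum_product', product_filter_lt]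

theorem stmt_7 {n : ℕ} (hn : 1 ≤ n)
    (ap : Fin n → ℝ) (aps apo : Fin n → Fin n → ℝ)
    (hap : ∀ j, 0 ≤ ap j)
    (hsym : ∀ j k, aps j k = aps k j)
    (hapo : ∀ j k, j ≠ k → apo j k ≤ 0)
    (x : Fin n → ℝ) (hx : ∀ j, x j ∈ Set.Icc (-1:ℝ) 1) :
    ChB (muPlus ap aps apo) x =
      ∑ j ∈ Finset.univ.filter (fun j => 0 < x j), ap j * x j
      + (∑ p ∈ (Finset.univ.filter (fun j => 0 < x j)).offDiag,
          aps p.1 p.2 * min (x p.1) (x p.2)) / 2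
      + ∑ j ∈ Finset.univ.filter (fun j => 0 < x j),
          ∑ k ∈ Finset.univ.filter (fun k => x k < 0),
            apo j k * min (x j) (-x k) :=
  stmt_7_general ap aps apo x hx
end

section
/- Let μ⁻ be given by a 2-additive decomposition with coefficients a_j⁻, a_{jk}⁻, a⁻_{j|k}. Then for every x ∈ [−1,1]^n, Ch^{B−}(x,μ⁻) = −Σ_{j ∈ J, x_j < 0} a_j⁻·x_j − Σ_{{j,k} ⊆ J, j ≠ k, x_j < 0, x_k < 0} a_{jk}⁻·max(x_j, x_k) − Σ_{j,k ∈ J, j ≠ k, x_j > 0, x_k < 0} a⁻_{j|k}·max(−x_j, x_k), where the second sum is over unordered pairs {j,k} and the third over ordered pairs (j,k). -/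
/-!
At level `t`, every term of `μ⁻` is a coefficient that is counted exactly when some threshold `y`
(namely `x j`, `max (x j) (x k)` or `max (-x j) (x k)`) satisfies `y < -t`. Since `-1 ≤ y`,
integrating over `t ∈ [0, 1]` weighs that coefficient by `-y` if `y < 0` and by `0` otherwise,
and the formula follows by linearity of the integral.
-/

open MeasureTheory Finset

lemma ite_lt_neg_eq_indicator (y r : ℝ) :
    (fun t : ℝ => if y < -t then r else 0) = (Set.Iio (-y)).indicator fun _ => r := by
  ext t
  simp [Set.indicator_apply, lt_neg]

lemma intervalIntegrable_ite_lt_neg (y r : ℝ) :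
    IntervalIntegrable (fun t => if y < -t then r else 0) volume 0 1 := by
  rw [ite_lt_neg_eq_indicator]
  constructor <;> exact (integrableOn_const measure_Ioc_lt_top.ne).indicator measurableSet_Iio

lemma integral_ite_lt_neg (y r : ℝ) (hy : -1 ≤ y) :
    ∫ t in (0:ℝ)..1, (if y < -t then r else 0) = if y < 0 then -(r * y) else 0 := by
  rw [ite_lt_neg_eq_indicator, intervalIntegral.integral_of_le zero_le_one,
    integral_indicator_const _ measurableSet_Iio, measureReal_restrict_apply measurableSet_Iio]
  split_ifs with hy0
  · have : Set.Iio (-y) ∩ Set.Ioc 0 1 = Set.Ioo 0 (-y) := by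
      ext t
      simp only [Set.mem_inter_iff, Set.mem_Iio, Set.mem_Ioc, Set.mem_Ioo]
      grind
    rw [this, Real.volume_real_Ioo_of_le (by linarith), smul_eq_mul]
    ring
  · have : Set.Iio (-y) ∩ Set.Ioc 0 1 = ∅ := by
      ext t
      simp only [Set.mem_inter_iff, Set.mem_Iio, Set.mem_Ioc, Set.mem_empty_iff_false, iff_false]
      grind
    simp [this]

section LayerSums

variable {ι : Type*} (s : Finset ι) (y r : ι → ℝ)

lemma intervalIntegrable_sum_filter_lt_neg :
    IntervalIntegrable (fun t => ∑ i ∈ s with y i < -t, r i) volume 0 1 := by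
  simp_rw [sum_filter]
  simpa only [← Finset.sum_fn] using
    IntervalIntegrable.sum s fun i _ => intervalIntegrable_ite_lt_neg (y i) (r i)

lemma integral_sum_filter_lt_neg (hy : ∀ i ∈ s, -1 ≤ y i) :
    ∫ t in (0:ℝ)..1, ∑ i ∈ s with y i < -t, r i = -∑ i ∈ s with y i < 0, r i * y i := by
  simp_rw [sum_filter]
  rw [intervalIntegral.integral_finsetSum fun i _ => intervalIntegrable_ite_lt_neg (y i) (r i),
    ← sum_neg_distrib]
  exact sum_congr rfl fun i hi =>
    (integral_ite_lt_neg (y i) (r i) (hy i hi)).trans (by split_ifs <;> simp)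

end LayerSums

lemma offDiag_filter_lt_s8 {ι α : Type*} [DecidableEq ι] [LinearOrder α] (s : Finset ι) (x : ι → α)
    (a : α) : (s.filter (x · < a)).offDiag = s.offDiag.filter fun p => max (x p.1) (x p.2) < a := by
  ext p
  simp only [mem_offDiag, mem_filter, max_lt_iff]
  tauto

lemma filter_neg_lt_product_filter_lt {ι κ α : Type*} [AddCommGroup α] [LinearOrder α]
    [IsOrderedAddMonoid α] (s : Finset ι) (s' : Finset κ) (x : ι → α) (x' : κ → α) (a : α) :
    s.filter (-a < x ·) ×ˢ s'.filter (x' · < a) =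
      (s ×ˢ s').filter fun p => max (-x p.1) (x' p.2) < a := by
  rw [← filter_product]
  simp only [max_lt_iff, neg_lt]

lemma muMinus_levelSets {n : ℕ} (am : Fin n → ℝ) (ams amo : Fin n → Fin n → ℝ) (x : Fin n → ℝ)
    (t : ℝ) :
    muMinus am ams amo (univ.filter (t < x ·)) (univ.filter (x · < -t)) =
      ∑ j with x j < -t, am j
        + (∑ p ∈ univ.offDiag with max (x p.1) (x p.2) < -t, ams p.1 p.2) / 2
        + ∑ p ∈ univ ×ˢ univ with max (-x p.1) (x p.2) < -t, amo p.1 p.2 := by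
  rw [muMinus, pairSum, offDiag_filter_lt_s8, ← filter_neg_lt_product_filter_lt, neg_neg, sum_product]

theorem stmt_8_general {n : ℕ}
    (am : Fin n → ℝ) (ams amo : Fin n → Fin n → ℝ)
    (x : Fin n → ℝ) (hx : ∀ j, x j ∈ Set.Icc (-1:ℝ) 1) :
    ChB (muMinus am ams amo) x =
      -(∑ j ∈ Finset.univ.filter (fun j => x j < 0), am j * x j)
      - (∑ p ∈ (Finset.univ.filter (fun j => x j < 0)).offDiag,
          ams p.1 p.2 * max (x p.1) (x p.2)) / 2
      - ∑ j ∈ Finset.univ.filter (fun j => 0 < x j),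
          ∑ k ∈ Finset.univ.filter (fun k => x k < 0),
            amo j k * max (-x j) (x k) := by
  have hx₁ : ∀ j, -1 ≤ x j := fun j => (hx j).1
  have hsingle := intervalIntegrable_sum_filter_lt_neg univ x am
  have hpair := (intervalIntegrable_sum_filter_lt_neg univ.offDiag
    (fun p => max (x p.1) (x p.2)) fun p => ams p.1 p.2).div_const 2
  have hcross := intervalIntegrable_sum_filter_lt_neg (univ ×ˢ univ)
    (fun p => max (-x p.1) (x p.2)) fun p => amo p.1 p.2
  simp_rw [ChB, muMinus_levelSets]
  rw [intervalIntegral.integral_add (hsingle.add hpair) hcross,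
    intervalIntegral.integral_add hsingle hpair, intervalIntegral.integral_div,
    integral_sum_filter_lt_neg _ _ _ fun j _ => hx₁ j,
    integral_sum_filter_lt_neg _ _ _ fun p _ => (hx₁ p.1).trans (le_max_left _ _),
    integral_sum_filter_lt_neg _ _ _ fun p _ => (hx₁ p.2).trans (le_max_right _ _),
    offDiag_filter_lt_s8, ← filter_neg_lt_product_filter_lt, neg_zero, sum_product]
  ring

theorem stmt_8 {n : ℕ} (hn : 1 ≤ n)
    (am : Fin n → ℝ) (ams amo : Fin n → Fin n → ℝ)
    (ham : ∀ j, 0 ≤ am j)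
    (hsym : ∀ j k, ams j k = ams k j)
    (hamo : ∀ j k, j ≠ k → amo j k ≤ 0)
    (x : Fin n → ℝ) (hx : ∀ j, x j ∈ Set.Icc (-1:ℝ) 1) :
    ChB (muMinus am ams amo) x =
      -(∑ j ∈ Finset.univ.filter (fun j => x j < 0), am j * x j)
      - (∑ p ∈ (Finset.univ.filter (fun j => x j < 0)).offDiag,
          ams p.1 p.2 * max (x p.1) (x p.2)) / 2
      - ∑ j ∈ Finset.univ.filter (fun j => 0 < x j),
          ∑ k ∈ Finset.univ.filter (fun k => x k < 0),
            amo j k * max (-x j) (x k) :=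
  stmt_8_general am ams amo x hx
end

section
/- Let μ⁺, μ⁻ be given by a 2-additive decomposition and let μ̂(C,D) = μ⁺(C,D) − μ⁻(C,D) for all (C,D) ∈ P(J). Then μ̂(C,D) = −μ̂(D,C) for every (C,D) ∈ P(J) if and only if: (1) a_j⁺ = a_j⁻ for every j ∈ J; (2) a_{jk}⁺ = a_{jk}⁻ for every unordered pair {j,k} ⊆ J; and (3) a⁺_{j|k} − a⁻_{j|k} = a⁻_{k|j} − a⁺_{k|j} for every ordered pair (j,k) with j ≠ k. -/
/-! Summing `μ̂(C,D) + μ̂(D,C)` groups the coefficients into the differences `a_j⁺ - a_j⁻`,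
`a_{jk}⁺ - a_{jk}⁻` and `(a⁺_{j|k} - a⁻_{j|k}) + (a⁺_{k|j} - a⁻_{k|j})`, so antisymmetry says that
a defect built linearly from these differences vanishes on all disjoint pairs. The backward
direction is then immediate, and the forward one follows by testing the defect on `({j}, ∅)`,
`({j,k}, ∅)` and `({j}, {k})`. -/

open Finset

namespace pairSum

variable {n : ℕ}

theorem sub (a b : Fin n → Fin n → ℝ) (C : Finset (Fin n)) :
    pairSum (a - b) C = pairSum a C - pairSum b C := by
  simp only [pairSum, Pi.sub_apply, sum_sub_distrib, sub_div]

@[simp]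
theorem empty (a : Fin n → Fin n → ℝ) : pairSum a ∅ = 0 := by
  simp [pairSum]

@[simp]
theorem singleton (a : Fin n → Fin n → ℝ) (j : Fin n) : pairSum a {j} = 0 := by
  simp [pairSum]

theorem pair (a : Fin n → Fin n → ℝ) {j k : Fin n} (hjk : j ≠ k) :
    pairSum a {j, k} = (a j k + a k j) / 2 := by
  have hj : j ∉ ({k} : Finset (Fin n)) := by simpa using hjk
  simp [pairSum, offDiag_insert hj, hjk]

theorem eq_zero {a : Fin n → Fin n → ℝ} (ha : ∀ j k, j ≠ k → a j k = 0) (C : Finset (Fin n)) :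
    pairSum a C = 0 := by
  simp only [pairSum, div_eq_zero_iff]
  exact Or.inl <| sum_eq_zero fun p hp => ha p.1 p.2 (mem_offDiag.mp hp).2.2

end pairSum

section Defect

variable {n : ℕ}

noncomputable def antisymDefect (d₁ : Fin n → ℝ) (d₂ d₃ : Fin n → Fin n → ℝ)
    (C D : Finset (Fin n)) : ℝ :=
  ∑ j ∈ C, d₁ j + ∑ j ∈ D, d₁ j + pairSum d₂ C + pairSum d₂ D +
    ∑ j ∈ C, ∑ k ∈ D, (d₃ j k + d₃ k j)

theorem muPlus_sub_muMinus_add_swap (ap am : Fin n → ℝ) (aps ams apo amo : Fin n → Fin n → ℝ)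
    (C D : Finset (Fin n)) :
    (muPlus ap aps apo C D - muMinus am ams amo C D) +
        (muPlus ap aps apo D C - muMinus am ams amo D C) =
      antisymDefect (ap - am) (aps - ams) (apo - amo) C D := by
  have hswap : ∑ j ∈ D, ∑ k ∈ C, (apo - amo) j k = ∑ j ∈ C, ∑ k ∈ D, (apo - amo) k j :=
    sum_comm
  simp only [muPlus, muMinus, antisymDefect, pairSum.sub, sum_add_distrib] at hswap ⊢
  simp only [Pi.sub_apply, sum_sub_distrib] at hswap ⊢
  linarith

theorem antisymDefect_eq_zero_iff (d₁ : Fin n → ℝ) {d₂ : Fin n → Fin n → ℝ}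
    (hd₂ : ∀ j k, d₂ j k = d₂ k j) (d₃ : Fin n → Fin n → ℝ) :
    (∀ C D : Finset (Fin n), Disjoint C D → antisymDefect d₁ d₂ d₃ C D = 0) ↔
      (∀ j, d₁ j = 0) ∧ (∀ j k, j ≠ k → d₂ j k = 0) ∧
        (∀ j k, j ≠ k → d₃ j k + d₃ k j = 0) := by
  constructor
  · intro h
    have h₁ : ∀ j, d₁ j = 0 := fun j => by
      simpa [antisymDefect] using h {j} ∅ (disjoint_empty_right _)
    refine ⟨h₁, fun j k hjk => ?_, fun j k hjk => ?_⟩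
    · have := h {j, k} ∅ (disjoint_empty_right _)
      simp only [antisymDefect, pairSum.pair d₂ hjk, sum_pair hjk, h₁, hd₂ k j] at this
      simpa using this
    · have := h {j} {k} (disjoint_singleton.mpr hjk)
      simpa [antisymDefect, h₁] using this
  · rintro ⟨h₁, h₂, h₃⟩ C D hCD
    have h₃' : ∀ j ∈ C, ∑ k ∈ D, (d₃ j k + d₃ k j) = 0 := fun j hj =>
      sum_eq_zero fun k hk => h₃ j k fun hjk => disjoint_left.mp hCD hj (hjk ▸ hk)
    simp [antisymDefect, h₁, pairSum.eq_zero h₂, sum_eq_zero h₃']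

end Defect

theorem stmt_9_general {n : ℕ}
    (ap am : Fin n → ℝ) (aps ams apo amo : Fin n → Fin n → ℝ)
    (hsymp : ∀ j k, aps j k = aps k j) (hsymm : ∀ j k, ams j k = ams k j) :
    (∀ C D : Finset (Fin n), Disjoint C D →
        muPlus ap aps apo C D - muMinus am ams amo C D =
          -(muPlus ap aps apo D C - muMinus am ams amo D C)) ↔
    ((∀ j, ap j = am j) ∧
     (∀ j k, j ≠ k → aps j k = ams j k) ∧
     (∀ j k, j ≠ k → apo j k - amo j k = amo k j - apo k j)) := by
  have hdefect : ∀ C D, (muPlus ap aps apo C D - muMinus am ams amo C D =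
      -(muPlus ap aps apo D C - muMinus am ams amo D C)) ↔
        antisymDefect (ap - am) (aps - ams) (apo - amo) C D = 0 := fun C D => by
    rw [← muPlus_sub_muMinus_add_swap, eq_neg_iff_add_eq_zero]
  have hsym : ∀ j k, (aps - ams) j k = (aps - ams) k j := fun j k => by
    simp only [Pi.sub_apply, hsymp j k, hsymm j k]
  simp only [hdefect, antisymDefect_eq_zero_iff _ hsym, Pi.sub_apply, sub_eq_zero]
  refine and_congr_right' (and_congr_right' (forall₂_congr fun j k => imp_congr_right fun _ => ?_))
  constructor <;> intro h <;> linarith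

theorem stmt_9 {n : ℕ} (hn : 1 ≤ n)
    (ap am : Fin n → ℝ) (aps ams apo amo : Fin n → Fin n → ℝ)
    (hap : ∀ j, 0 ≤ ap j) (ham : ∀ j, 0 ≤ am j)
    (hsymp : ∀ j k, aps j k = aps k j) (hsymm : ∀ j k, ams j k = ams k j)
    (hapo : ∀ j k, j ≠ k → apo j k ≤ 0) (hamo : ∀ j k, j ≠ k → amo j k ≤ 0) :
    (∀ C D : Finset (Fin n), Disjoint C D →
        muPlus ap aps apo C D - muMinus am ams amo C D =
          -(muPlus ap aps apo D C - muMinus am ams amo D C)) ↔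
    ((∀ j, ap j = am j) ∧
     (∀ j k, j ≠ k → aps j k = ams j k) ∧
     (∀ j k, j ≠ k → apo j k - amo j k = amo k j - apo k j)) :=
  stmt_9_general ap am aps ams apo amo hsymp hsymm
end

section
/- Let μ⁺, μ⁻ be given by a 2-additive decomposition. Then μ⁺(C,D) = μ⁻(D,C) for every (C,D) ∈ P(J) if and only if: (1) a_j⁺ = a_j⁻ for every j ∈ J; (2) a_{jk}⁺ = a_{jk}⁻ for every unordered pair {j,k} ⊆ J; and (3) a⁺_{j|k} = a⁻_{k|j} for every ordered pair (j,k) with j ≠ k. -/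
/-!
`μ⁻(D, C)` is the `μ⁺(C, D)` of the coefficients `a⁻` with transposed interaction terms, so the
claim is that a 2-additive `μ⁺` determines its coefficients. They are read off from its values at
`({j}, ∅)`, `({j, k}, ∅)` and `({j}, {k})`.
-/

open Finset

lemma Finset.offDiag_pair {α : Type*} [DecidableEq α] {a b : α} (hab : a ≠ b) :
    ({a, b} : Finset α).offDiag = {(a, b), (b, a)} := by
  ext ⟨x, y⟩
  simp only [mem_offDiag, mem_insert, mem_singleton, Prod.ext_iff]
  grind

lemma pairSum_pair {n : ℕ} (a : Fin n → Fin n → ℝ) {j k : Fin n} (hjk : j ≠ k) :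
    pairSum a {j, k} = (a j k + a k j) / 2 := by
  rw [pairSum, offDiag_pair hjk, sum_pair (by simp [hjk])]

lemma pairSum_congr {n : ℕ} {a b : Fin n → Fin n → ℝ} {C : Finset (Fin n)}
    (h : ∀ j k, j ≠ k → a j k = b j k) : pairSum a C = pairSum b C := by
  unfold pairSum
  congr 1
  exact sum_congr rfl fun p hp => h p.1 p.2 (mem_offDiag.mp hp).2.2

lemma muMinus_eq_muPlus_swap {n : ℕ} (am : Fin n → ℝ) (ams amo : Fin n → Fin n → ℝ)
    (C D : Finset (Fin n)) :
    muMinus am ams amo D C = muPlus am ams (fun j k => amo k j) C D := by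
  rw [muMinus, muPlus, sum_comm]

section muPlus

variable {n : ℕ} (a : Fin n → ℝ) (s o : Fin n → Fin n → ℝ)

lemma muPlus_singleton_empty (j : Fin n) : muPlus a s o {j} ∅ = a j := by
  simp [muPlus, pairSum]

lemma muPlus_pair_empty {j k : Fin n} (hjk : j ≠ k) :
    muPlus a s o {j, k} ∅ = a j + a k + (s j k + s k j) / 2 := by
  rw [muPlus, pairSum_pair s hjk, sum_pair hjk]
  simp

lemma muPlus_singleton_singleton (j k : Fin n) : muPlus a s o {j} {k} = a j + o j k := by
  simp [muPlus, pairSum]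

end muPlus

theorem muPlus_eq_muPlus_iff {n : ℕ} {a b : Fin n → ℝ} {s t o p : Fin n → Fin n → ℝ}
    (hs : ∀ j k, s j k = s k j) (ht : ∀ j k, t j k = t k j) :
    (∀ C D : Finset (Fin n), Disjoint C D → muPlus a s o C D = muPlus b t p C D) ↔
    ((∀ j, a j = b j) ∧ (∀ j k, j ≠ k → s j k = t j k) ∧ (∀ j k, j ≠ k → o j k = p j k)) := by
  constructor
  · intro h
    have hsingle : ∀ j, a j = b j := fun j => by
      simpa only [muPlus_singleton_empty] using h {j} ∅ (disjoint_empty_right _)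
    refine ⟨hsingle, fun j k hjk => ?_, fun j k hjk => ?_⟩
    · have hpair := h {j, k} ∅ (disjoint_empty_right _)
      rw [muPlus_pair_empty _ _ _ hjk, muPlus_pair_empty _ _ _ hjk, hs k j, ht k j,
        hsingle j, hsingle k] at hpair
      linarith
    · have hcross := h {j} {k} (disjoint_singleton.mpr hjk)
      rw [muPlus_singleton_singleton, muPlus_singleton_singleton, hsingle j] at hcross
      linarith
  · rintro ⟨hsingle, hpair, hinter⟩ C D hCD
    rw [muPlus, muPlus, pairSum_congr hpair, sum_congr rfl fun j _ => hsingle j]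
    congr 1
    refine sum_congr rfl fun j hj => sum_congr rfl fun k hk => hinter j k ?_
    rintro rfl
    exact disjoint_left.mp hCD hj hk

theorem stmt_11_general {n : ℕ}
    (ap am : Fin n → ℝ) (aps ams apo amo : Fin n → Fin n → ℝ)
    (hsymp : ∀ j k, aps j k = aps k j) (hsymm : ∀ j k, ams j k = ams k j) :
    (∀ C D : Finset (Fin n), Disjoint C D →
        muPlus ap aps apo C D = muMinus am ams amo D C) ↔
    ((∀ j, ap j = am j) ∧
     (∀ j k, j ≠ k → aps j k = ams j k) ∧
     (∀ j k, j ≠ k → apo j k = amo k j)) := by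
  simp only [muMinus_eq_muPlus_swap]
  exact muPlus_eq_muPlus_iff hsymp hsymm

theorem stmt_11 {n : ℕ} (hn : 1 ≤ n)
    (ap am : Fin n → ℝ) (aps ams apo amo : Fin n → Fin n → ℝ)
    (hap : ∀ j, 0 ≤ ap j) (ham : ∀ j, 0 ≤ am j)
    (hsymp : ∀ j k, aps j k = aps k j) (hsymm : ∀ j k, ams j k = ams k j)
    (hapo : ∀ j k, j ≠ k → apo j k ≤ 0) (hamo : ∀ j k, j ≠ k → amo j k ≤ 0) :
    (∀ C D : Finset (Fin n), Disjoint C D →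
        muPlus ap aps apo C D = muMinus am ams amo D C) ↔
    ((∀ j, ap j = am j) ∧
     (∀ j k, j ≠ k → aps j k = ams j k) ∧
     (∀ j k, j ≠ k → apo j k = amo k j)) :=
  stmt_11_general ap am aps ams apo amo hsymp hsymm
end

section
/- Let μ⁺ be given by a 2-additive decomposition. Then μ⁺(C,D) ≤ μ⁺(C∪{j},D) holds for all j ∈ J and all (C∪{j},D) ∈ P(J) with j ∉ C if and only if a_j⁺ + Σ_{k∈C} a_{jk}⁺ + Σ_{k∈D} a⁺_{j|k} ≥ 0 for all j ∈ J and all (C∪{j},D) ∈ P(J) with j ∉ C; indeed, μ⁺(C∪{j},D) − μ⁺(C,D) = a_j⁺ + Σ_{k∈C} a_{jk}⁺ + Σ_{k∈D} a⁺_{j|k} for every such j, C, D. -/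
theorem Finset.sum_offDiag_insert {α M : Type*} [DecidableEq α] [AddCommMonoid M]
    (f : α × α → M) {a : α} {s : Finset α} (ha : a ∉ s) :
    ∑ p ∈ (insert a s).offDiag, f p =
      ∑ p ∈ s.offDiag, f p + ∑ x ∈ s, (f (a, x) + f (x, a)) := by
  have h₁ : Disjoint (s.offDiag ∪ {a} ×ˢ s) (s ×ˢ {a}) := by
    simp only [disjoint_left, mem_union, mem_offDiag, mem_product, mem_singleton]
    grind
  have h₂ : Disjoint s.offDiag ({a} ×ˢ s) := by
    simp only [disjoint_left, mem_offDiag, mem_product, mem_singleton]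
    grind
  rw [offDiag_insert ha, sum_union h₁, sum_union h₂, sum_product, sum_product_right,
    sum_singleton, sum_add_distrib, add_assoc]
  simp only [sum_singleton]

theorem pairSum_insert {n : ℕ} {a : Fin n → Fin n → ℝ} (hsym : ∀ j k, a j k = a k j)
    {j : Fin n} {C : Finset (Fin n)} (hj : j ∉ C) :
    pairSum a (insert j C) = pairSum a C + ∑ k ∈ C, a j k := by
  -- the new ordered pairs `(j, k)` and `(k, j)` carry equal weight, which cancels the `/ 2`
  simp only [pairSum, Finset.sum_offDiag_insert (fun p ↦ a p.1 p.2) hj, ← hsym j,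
    Finset.sum_add_distrib]
  ring

theorem muPlus_insert_sub_muPlus {n : ℕ} (ap : Fin n → ℝ) {aps : Fin n → Fin n → ℝ}
    (apo : Fin n → Fin n → ℝ) (hsym : ∀ j k, aps j k = aps k j)
    {j : Fin n} {C : Finset (Fin n)} (D : Finset (Fin n)) (hj : j ∉ C) :
    muPlus ap aps apo (insert j C) D - muPlus ap aps apo C D =
      ap j + ∑ k ∈ C, aps j k + ∑ k ∈ D, apo j k := by
  rw [muPlus, muPlus, Finset.sum_insert hj, Finset.sum_insert hj, pairSum_insert hsym hj]
  ring

theorem stmt_13_general {n : ℕ}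
    (ap : Fin n → ℝ) (aps apo : Fin n → Fin n → ℝ)
    (hsym : ∀ j k, aps j k = aps k j) :
    ((∀ (j : Fin n) (C D : Finset (Fin n)), j ∉ C → Disjoint (insert j C) D →
        muPlus ap aps apo C D ≤ muPlus ap aps apo (insert j C) D) ↔
      (∀ (j : Fin n) (C D : Finset (Fin n)), j ∉ C → Disjoint (insert j C) D →
        0 ≤ ap j + ∑ k ∈ C, aps j k + ∑ k ∈ D, apo j k)) ∧
    (∀ (j : Fin n) (C D : Finset (Fin n)), j ∉ C → Disjoint (insert j C) D →
        muPlus ap aps apo (insert j C) D - muPlus ap aps apo C D =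
          ap j + ∑ k ∈ C, aps j k + ∑ k ∈ D, apo j k) := by
  have hdiff j C D (hj : j ∉ C) := muPlus_insert_sub_muPlus ap apo hsym D hj
  refine ⟨forall₄_congr fun j C D hj ↦ imp_congr_right fun _ ↦ ?_,
    fun j C D hj _ ↦ hdiff j C D hj⟩
  rw [← hdiff j C D hj, sub_nonneg]

theorem stmt_13 {n : ℕ} (hn : 1 ≤ n)
    (ap : Fin n → ℝ) (aps apo : Fin n → Fin n → ℝ)
    (hap : ∀ j, 0 ≤ ap j)
    (hsym : ∀ j k, aps j k = aps k j)
    (hapo : ∀ j k, j ≠ k → apo j k ≤ 0) :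
    ((∀ (j : Fin n) (C D : Finset (Fin n)), j ∉ C → Disjoint (insert j C) D →
        muPlus ap aps apo C D ≤ muPlus ap aps apo (insert j C) D) ↔
      (∀ (j : Fin n) (C D : Finset (Fin n)), j ∉ C → Disjoint (insert j C) D →
        0 ≤ ap j + ∑ k ∈ C, aps j k + ∑ k ∈ D, apo j k)) ∧
    (∀ (j : Fin n) (C D : Finset (Fin n)), j ∉ C → Disjoint (insert j C) D →
        muPlus ap aps apo (insert j C) D - muPlus ap aps apo C D =
          ap j + ∑ k ∈ C, aps j k + ∑ k ∈ D, apo j k) :=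
  stmt_13_general ap aps apo hsym
end
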